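/- For C ≠ 0, with F as above (F(t) = ∫₀¹ √(2/π)∫_{r/√(φ_C(t))}^{∞} e^{−v²/2} dv dr), lim_{t→0+} F(t)/√t = √(2/π). -/

import Mathlib

/-! With `Ψ x = ∫_x^∞ e^{-v²/2} dv`, the substitution `r = s u` gives
`∫₀¹ Ψ (r / s) dr = s ∫₀^{1/s} Ψ`, and integration by parts gives
`∫₀^X Ψ = X Ψ(X) - e^{-X²/2} + 1`, which tends to `1` by Mills' inequality
`X Ψ(X) ≤ e^{-X²/2}`. Hence `F t ~ √(2/π) √(φ t)`, and `φ t ~ t` because `φ 0 = 0`, `φ' 0 = 1`. -/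

open Filter Topology Set MeasureTheory Real

lemma integrable_exp_neg_sq_div_two : Integrable fun v : ℝ => exp (-v ^ 2 / 2) := by
  simpa [neg_div, div_eq_inv_mul] using integrable_exp_neg_mul_sq (show (0:ℝ) < 1/2 by norm_num)

lemma hasDerivAt_exp_neg_sq_div_two (x : ℝ) :
    HasDerivAt (fun v => exp (-v ^ 2 / 2)) (-x * exp (-x ^ 2 / 2)) x := by
  have h : HasDerivAt (fun v : ℝ => -v ^ 2 / 2) (-x) x := by
    refine ((hasDerivAt_pow 2 x).fun_neg.div_const 2).congr_deriv ?_
    norm_num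
    ring
  exact h.exp.congr_deriv (mul_comm _ _)

lemma tendsto_exp_neg_sq_div_two_atTop : Tendsto (fun x : ℝ => exp (-x ^ 2 / 2)) atTop (𝓝 0) := by
  have h : Tendsto (fun x : ℝ => x ^ 2 / 2) atTop atTop :=
    (tendsto_pow_atTop two_ne_zero).atTop_div_const two_pos
  simpa only [Function.comp_def, neg_div] using tendsto_exp_neg_atTop_nhds_zero.comp h

noncomputable def gaussianTail (x : ℝ) : ℝ := ∫ v in Ici x, exp (-v ^ 2 / 2)

lemma gaussianTail_nonneg (x : ℝ) : 0 ≤ gaussianTail x :=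
  setIntegral_nonneg measurableSet_Ici fun _ _ => (exp_pos _).le

lemma gaussianTail_eq_sub_integral (x : ℝ) :
    gaussianTail x = gaussianTail 0 - ∫ v in (0:ℝ)..x, exp (-v ^ 2 / 2) := by
  simp only [gaussianTail, integral_Ici_eq_integral_Ioi]
  rw [← intervalIntegral.integral_Ioi_sub_Ioi' integrable_exp_neg_sq_div_two.integrableOn
    integrable_exp_neg_sq_div_two.integrableOn]
  ring

lemma hasDerivAt_gaussianTail (x : ℝ) : HasDerivAt gaussianTail (-exp (-x ^ 2 / 2)) x := by
  have hcont : Continuous fun v : ℝ => exp (-v ^ 2 / 2) := by fun_prop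
  have h : HasDerivAt (fun x => ∫ v in (0:ℝ)..x, exp (-v ^ 2 / 2)) (exp (-x ^ 2 / 2)) x :=
    intervalIntegral.integral_hasDerivAt_right integrable_exp_neg_sq_div_two.intervalIntegrable
      (hcont.stronglyMeasurableAtFilter _ _) hcont.continuousAt
  exact (h.const_sub _).congr_of_eventuallyEq (.of_forall gaussianTail_eq_sub_integral)

lemma mul_gaussianTail_le {x : ℝ} (hx : 0 ≤ x) : x * gaussianTail x ≤ exp (-x ^ 2 / 2) := by
  have hderiv : ∀ v ∈ Ici x, HasDerivAt (fun v => -exp (-v ^ 2 / 2)) (v * exp (-v ^ 2 / 2)) v :=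
    fun v _ => by simpa using (hasDerivAt_exp_neg_sq_div_two v).fun_neg
  have hnonneg : ∀ v ∈ Ioi x, 0 ≤ v * exp (-v ^ 2 / 2) :=
    fun v hv => mul_nonneg (hx.trans hv.out.le) (exp_pos _).le
  have hlim := tendsto_exp_neg_sq_div_two_atTop.neg
  rw [neg_zero] at hlim
  have hint := integrableOn_Ioi_deriv_of_nonneg' hderiv hnonneg hlim
  have heq := integral_Ioi_of_hasDerivAt_of_nonneg' hderiv hnonneg hlim
  rw [zero_sub, neg_neg] at heq
  rw [gaussianTail, integral_Ici_eq_integral_Ioi, ← integral_const_mul, ← heq]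
  refine setIntegral_mono_on (integrable_exp_neg_sq_div_two.integrableOn.const_mul x) hint
    measurableSet_Ioi fun v hv => ?_
  exact mul_le_mul_of_nonneg_right hv.out.le (exp_pos _).le

lemma tendsto_mul_gaussianTail_atTop : Tendsto (fun x => x * gaussianTail x) atTop (𝓝 0) := by
  refine squeeze_zero' ?_ ?_ tendsto_exp_neg_sq_div_two_atTop
  · filter_upwards [eventually_ge_atTop 0] with x hx using mul_nonneg hx (gaussianTail_nonneg x)
  · filter_upwards [eventually_ge_atTop 0] with x hx using mul_gaussianTail_le hx

lemma integral_gaussianTail (x : ℝ) :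
    ∫ u in (0:ℝ)..x, gaussianTail u = x * gaussianTail x - exp (-x ^ 2 / 2) + 1 := by
  have hderiv : ∀ u ∈ uIcc 0 x,
      HasDerivAt (fun u => u * gaussianTail u - exp (-u ^ 2 / 2)) (gaussianTail u) u := by
    intro u _
    refine (((hasDerivAt_id' u).fun_mul (hasDerivAt_gaussianTail u)).fun_sub
      (hasDerivAt_exp_neg_sq_div_two u)).congr_deriv ?_
    ring
  have hcont : Continuous gaussianTail :=
    continuous_iff_continuousAt.2 fun u => (hasDerivAt_gaussianTail u).continuousAt
  rw [intervalIntegral.integral_eq_sub_of_hasDerivAt hderiv (hcont.intervalIntegrable _ _)]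
  norm_num

lemma tendsto_integral_gaussianTail_atTop :
    Tendsto (fun x => ∫ u in (0:ℝ)..x, gaussianTail u) atTop (𝓝 1) := by
  simp only [integral_gaussianTail]
  simpa using (tendsto_mul_gaussianTail_atTop.sub tendsto_exp_neg_sq_div_two_atTop).add_const 1

lemma tendsto_integral_gaussianTail_div {b : ℝ} (hb : 0 < b) :
    Tendsto (fun s => (∫ r in (0:ℝ)..b, gaussianTail (r / s)) / s) (𝓝[>] 0) (𝓝 1) := by
  have hinv : Tendsto (fun s : ℝ => b / s) (𝓝[>] 0) atTop := by
    simpa [div_eq_mul_inv] using tendsto_inv_nhdsGT_zero.const_mul_atTop hb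
  refine (tendsto_integral_gaussianTail_atTop.comp hinv).congr' ?_
  filter_upwards [self_mem_nhdsWithin] with s hs
  rw [intervalIntegral.integral_comp_div _ hs.out.ne', zero_div, smul_eq_mul,
    mul_div_cancel_left₀ _ hs.out.ne', Function.comp_apply]

lemma tendsto_div_self_nhdsGT_of_hasDerivAt {φ : ℝ → ℝ} {d : ℝ} (hφ0 : φ 0 = 0)
    (hφ : HasDerivAt φ d 0) : Tendsto (fun t => φ t / t) (𝓝[>] 0) (𝓝 d) := by
  refine ((hasDerivAt_iff_tendsto_slope.mp hφ).mono_left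
    (nhdsWithin_mono _ fun t ht => ne_of_gt ht)).congr fun t => ?_
  simp [slope_def_field, hφ0]

lemma tendsto_comp_sqrt_div_sqrt {φ G : ℝ → ℝ} {d L : ℝ} (hd : 0 < d) (hφ0 : φ 0 = 0)
    (hφ : HasDerivAt φ d 0) (hG : Tendsto (fun s => G s / s) (𝓝[>] 0) (𝓝 L)) :
    Tendsto (fun t => G √(φ t) / √t) (𝓝[>] 0) (𝓝 (L * √d)) := by
  have hslope := tendsto_div_self_nhdsGT_of_hasDerivAt hφ0 hφ
  have hpos : ∀ᶠ t in 𝓝[>] 0, 0 < φ t := by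
    filter_upwards [hslope.eventually (lt_mem_nhds hd), self_mem_nhdsWithin] with t h ht
    exact (div_pos_iff_of_pos_right ht).mp h
  have hsqrt : Tendsto (fun t => √(φ t)) (𝓝[>] 0) (𝓝[>] 0) := by
    refine tendsto_nhdsWithin_iff.2 ⟨?_, hpos.mono fun t ht => sqrt_pos.2 ht⟩
    simpa [Function.comp_def, hφ0] using
      (continuous_sqrt.tendsto _).comp (hφ.continuousAt.tendsto.mono_left nhdsWithin_le_nhds)
  have hratio : Tendsto (fun t => √(φ t) / √t) (𝓝[>] 0) (𝓝 √d) :=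
    ((continuous_sqrt.tendsto d).comp hslope).congr' <| by
      filter_upwards [self_mem_nhdsWithin] with t ht using sqrt_div' _ (le_of_lt ht)
  refine ((hG.comp hsqrt).mul hratio).congr' ?_
  filter_upwards [hpos] with t ht
  have : √(φ t) ≠ 0 := (sqrt_pos.2 ht).ne'
  simp only [Function.comp_apply]
  field_simp

lemma hasDerivAt_one_sub_exp_neg_mul_div {a : ℝ} (ha : a ≠ 0) :
    HasDerivAt (fun t => (1 - exp (-a * t)) / a) 1 0 := by
  have := (((hasDerivAt_id' (0:ℝ)).const_mul (-a)).exp.const_sub 1).div_const a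
  refine this.congr_deriv ?_
  field_simp
  simp

theorem stmt11 (C : ℝ) (hC : C ≠ 0) (φ : ℝ → ℝ)
    (hφ : ∀ t, φ t = (1 - Real.exp (-2 * Real.sqrt 2 * C * t)) / (2 * Real.sqrt 2 * C))
    (F : ℝ → ℝ)
    (hF : ∀ t > (0:ℝ), F t = ∫ r in (0:ℝ)..1,
      Real.sqrt (2/Real.pi) * ∫ v in Set.Ici (r / Real.sqrt (φ t)), Real.exp (-v^2/2)) :
    Tendsto (fun t => F t / Real.sqrt t) (nhdsWithin 0 (Ioi 0))
      (nhds (Real.sqrt (2/Real.pi))) := by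
  have ha : 2 * √2 * C ≠ 0 := by positivity
  have hφa : φ = fun t => (1 - exp (-(2 * √2 * C) * t)) / (2 * √2 * C) :=
    funext fun t => by rw [hφ]; ring_nf
  have hG : Tendsto (fun s => (∫ r in (0:ℝ)..1, √(2 / π) * gaussianTail (r / s)) / s)
      (𝓝[>] 0) (𝓝 (√(2 / π) * 1)) := by
    simpa only [intervalIntegral.integral_const_mul, mul_div_assoc] using
      (tendsto_integral_gaussianTail_div one_pos).const_mul √(2 / π)
  have hlim := tendsto_comp_sqrt_div_sqrt one_pos (by simp [hφa])
    (hφa ▸ hasDerivAt_one_sub_exp_neg_mul_div ha) hG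
  rw [sqrt_one, mul_one, mul_one] at hlim
  refine hlim.congr' ?_
  filter_upwards [self_mem_nhdsWithin] with t ht
  rw [hF t ht]
  rfl
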